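/- Let N ≥ 1 and β : ℝ. For the complete graph with homogeneous infection rate, i.e. b k l = β if k ≠ l and b k k = 0, the characteristic polynomial of the SI infinitesimal generator Q equals ∏_{k=0}^{N} (X + β·k·(N−k))^{C(N,k)}, where C(N,k) is the binomial coefficient. That is, the eigenvalue −β·k·(N−k) occurs with algebraic multiplicity C(N,k) for each 0 ≤ k ≤ N. -/

import Mathlib

/-- The infinitesimal generator of the Markovian SI process with weighted
infection rates `b`, indexed by the set of infected nodes: the entry `Q S T`
equals `∑_{k ∈ S} b k m` if `T = S ∪ {m}` for some `m ∉ S` (equivalently,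
`S ⊆ T` and `T \ S` is a singleton `{m}`), the diagonal entry is
`−∑_{m ∉ S} ∑_{k ∈ S} b k m`, and all other entries are `0`. -/
noncomputable def SIgen (N : ℕ) (b : Fin N → Fin N → ℝ) :
    Matrix (Finset (Fin N)) (Finset (Fin N)) ℝ := fun S T =>
  if T = S then -∑ m ∈ Sᶜ, ∑ k ∈ S, b k m
  else if S ⊆ T ∧ (T \ S).card = 1 then ∑ m ∈ T \ S, ∑ k ∈ S, b k m
  else 0

/-- The weight of the S–I cut set of the configuration with infected set `S`. -/
noncomputable def SIcut (N : ℕ) (b : Fin N → Fin N → ℝ) (S : Finset (Fin N)) : ℝ :=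
  ∑ k ∈ S, ∑ l ∈ Sᶜ, b k l

/-! Ordering the configurations by the colexicographic order, which extends inclusion, makes the
generator upper triangular, since an infection only ever enlarges the infected set. Hence its
eigenvalues are its diagonal entries `-SIcut S`, and on the complete graph the cut of a set with
`k` infected nodes has weight `β k (N - k)`; there are `C(N, k)` such sets. -/

open Finset Polynomial Matrix

theorem Matrix.charpoly_of_eq_zero_of_not_subset {α R : Type*} [Fintype α] [LinearOrder α]
    [CommRing R] (M : Matrix (Finset α) (Finset α) R) (hM : ∀ S T, ¬ S ⊆ T → M S T = 0) :
    M.charpoly = ∏ S, (X - C (M S S)) := by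
  let : Fintype (Colex (Finset α)) := Fintype.ofEquiv _ toColex
  have hM' : (reindex toColex toColex M).IsUpperTriangular := fun S T hTS =>
    hM _ _ fun hST => hTS.not_ge (Colex.toColex_le_toColex_of_subset hST)
  rw [← charpoly_reindex toColex, charpoly_of_isUpperTriangular _ hM']
  exact toColex.symm.prod_comp fun S => X - C (M S S)

theorem Finset.prod_powerset_apply_card {α M : Type*} [CommMonoid M] (f : ℕ → M) {x : Finset α} :
    ∏ m ∈ x.powerset, f #m = ∏ m ∈ range (#x + 1), f m ^ (#x).choose m :=
  sum_powerset_apply_card (α := Additive M) (Additive.ofMul ∘ f)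

theorem SIgen_eq_zero_of_not_subset {N : ℕ} (b : Fin N → Fin N → ℝ) {S T : Finset (Fin N)}
    (hST : ¬ S ⊆ T) : SIgen N b S T = 0 := by
  have hTS : T ≠ S := fun h => hST h.ge
  simp [SIgen, hTS, hST]

theorem SIgen_apply_self {N : ℕ} (b : Fin N → Fin N → ℝ) (S : Finset (Fin N)) :
    SIgen N b S S = -SIcut N b S := by
  rw [SIgen, if_pos rfl, SIcut, sum_comm]

theorem SIcut_eq_of_complete {N : ℕ} {β : ℝ} {b : Fin N → Fin N → ℝ}
    (hb : ∀ k l : Fin N, b k l = if k ≠ l then β else 0) (S : Finset (Fin N)) :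
    SIcut N b S = β * #S * (N - #S : ℕ) := by
  have hβ : ∀ k ∈ S, ∀ l ∈ Sᶜ, b k l = β := fun k hk l hl =>
    (hb k l).trans (if_pos fun h : k = l => mem_compl.1 hl (h ▸ hk))
  rw [SIcut, sum_congr rfl fun k hk => sum_congr rfl (hβ k hk)]
  simp only [sum_const, card_compl, Fintype.card_fin, nsmul_eq_mul]
  ring

theorem stmt10_general (N : ℕ) (β : ℝ)
    (b : Fin N → Fin N → ℝ) (hb : ∀ k l : Fin N, b k l = if k ≠ l then β else 0) :
    (SIgen N b).charpoly =
      ∏ k ∈ Finset.range (N + 1),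
        (Polynomial.X + Polynomial.C (β * (k : ℝ) * ((N - k : ℕ) : ℝ))) ^ N.choose k := by
  have hdiag : ∀ S, X - C (SIgen N b S S) = X + C (β * #S * (N - #S : ℕ)) := fun S => by
    rw [SIgen_apply_self, SIcut_eq_of_complete hb, map_neg, sub_neg_eq_add]
  rw [charpoly_of_eq_zero_of_not_subset _ fun S T => SIgen_eq_zero_of_not_subset b,
    Fintype.prod_congr _ _ hdiag, ← powerset_univ,
    prod_powerset_apply_card fun k => X + C (β * k * (N - k : ℕ)), card_univ,
    Fintype.card_fin]

/-- for the complete graph with homogeneous infection rate `β`,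
the characteristic polynomial of the SI generator is
`∏_{k=0}^{N} (X + β·k·(N−k))^{C(N,k)}`. -/
theorem stmt10 (N : ℕ) (hN : 1 ≤ N) (β : ℝ)
    (b : Fin N → Fin N → ℝ) (hb : ∀ k l : Fin N, b k l = if k ≠ l then β else 0) :
    (SIgen N b).charpoly =
      ∏ k ∈ Finset.range (N + 1),
        (Polynomial.X + Polynomial.C (β * (k : ℝ) * ((N - k : ℕ) : ℝ))) ^ N.choose k :=
  stmt10_general N β b hb
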